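/- For a sequential decision-making mechanism M, define predicates gdf_k on prefixes (s_1, …, s_k) by backward recursion: gdf_n(s_1, …, s_n) holds iff γ(s_1, …, s_n) = true; and for k < n, gdf_k(s_1, …, s_k) holds iff either [there exists t ∈ A_{k+1} with γ(s_1, …, s_k, t, u_{k+2}, …, u_n) = true for all u_{k+2}, …, u_n, and for every s_{k+1} ∈ A_{k+1} the value γ(s_1, …, s_k, s_{k+1}, u_{k+2}, …, u_n) does not depend on (u_{k+2}, …, u_n)], or [there is no such t, and gdf_{k+1}(s_1, …, s_k, s_{k+1}) holds for every s_{k+1} ∈ A_{k+1}]. Then for every 0 ≤ k ≤ n and every prefix (s_1, …, s_k): the partial mechanism M_k(s_1, …, s_k) ∈ GDF if and only if gdf_k(s_1, …, s_k) holds. In particular, M ∈ GDF if and only if gdf_0 holds. -/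

import Mathlib

/-- A sequential decision-making mechanism: `n` agents, finite nonempty
action sets `A 0, …, A (n-1)` (agents act in the order of their indices),
and a deontic constraint `γ` on action profiles. -/
structure Mech where
  n : ℕ
  A : Fin n → Type
  fin : ∀ i, Finite (A i)
  ne : ∀ i, Nonempty (A i)
  γ : (∀ i, A i) → Bool

namespace Mech

/-- An action profile. -/
abbrev Profile (M : Mech) : Type := ∀ i, M.A i

/-- Agent `i` is responsible under profile `s`: the deontic constraint is
violated, and agent `i` had an action `t` that, given the actions of the
agents before it, would have guaranteed the constraint no matter what the
later agents do. -/
def Responsible (M : Mech) (s : M.Profile) (i : Fin M.n) : Prop :=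
  M.γ s = false ∧ ∃ t : M.A i, ∀ s' : M.Profile,
    (∀ j, j < i → s' j = s j) → s' i = t → M.γ s' = true

/-- `cf_i(s_1, …, s_{i-1})`: agent `i` has an action guaranteeing the
constraint, given the prefix of `s` before `i`. -/
def Cf (M : Mech) (s : M.Profile) (i : Fin M.n) : Prop :=
  ∃ t : M.A i, ∀ s' : M.Profile,
    (∀ j, j < i → s' j = s j) → s' i = t → M.γ s' = true

/-- Diffusion-free: at most one responsible agent whenever `γ` is violated. -/
def DF (M : Mech) : Prop :=
  ∀ s : M.Profile, M.γ s = false →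
    ∀ i j, M.Responsible s i → M.Responsible s j → i = j

/-- Gap-free: at least one responsible agent whenever `γ` is violated. -/
def GF (M : Mech) : Prop :=
  ∀ s : M.Profile, M.γ s = false → ∃ i, M.Responsible s i

/-- Gap-and-diffusion-free: exactly one responsible agent whenever `γ` is violated. -/
def GDF (M : Mech) : Prop :=
  ∀ s : M.Profile, M.γ s = false → ∃! i, M.Responsible s i

/-- Responsibility-free: no agent is responsible under any profile. -/
def RF (M : Mech) : Prop :=
  ∀ (s : M.Profile) (i : Fin M.n), ¬ M.Responsible s i

/-- Agent `j` of the partial mechanism `M_k` as an agent of `M`. -/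
def shift (M : Mech) (k : ℕ) (h : k ≤ M.n) (j : Fin (M.n - k)) : Fin M.n :=
  ⟨k + j.val, by omega⟩

/-- Combine a prefix of `s` (first `k` actions) with actions `u` of
agents `k+1, …, n` into a full profile. -/
def glue (M : Mech) (k : ℕ) (h : k ≤ M.n) (s : M.Profile)
    (u : ∀ j : Fin (M.n - k), M.A (M.shift k h j)) : M.Profile := fun i =>
  if hi : i.val < k then s i
  else
    have hj : i.val - k < M.n - k := by omega
    have he : M.shift k h ⟨i.val - k, hj⟩ = i := Fin.ext (by
      show k + (i.val - k) = i.val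
      omega)
    he ▸ u ⟨i.val - k, hj⟩

/-- The partial mechanism `M_k(s_1, …, s_k)`: the first `k` agents have
already acted according to `s`. -/
def part (M : Mech) (k : ℕ) (h : k ≤ M.n) (s : M.Profile) : Mech where
  n := M.n - k
  A := fun j => M.A (M.shift k h j)
  fin := fun _ => M.fin _
  ne := fun _ => M.ne _
  γ := fun u => M.γ (M.glue k h s u)

/-- The restriction of a profile of `M` to a profile of `M_k(s_1, …, s_k)`. -/
def restrict (M : Mech) (k : ℕ) (h : k ≤ M.n) (s : M.Profile) :
    (M.part k h s).Profile :=
  fun j => s (M.shift k h j)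

end Mech

namespace Mech

/-- The predicate `gdf_k(s_1, …, s_k)` of STATEMENT 8, defined by backward
recursion: `gdf_n(s_1, …, s_n)` holds iff `γ(s_1, …, s_n) = true`; for
`k < n`, `gdf_k(s_1, …, s_k)` holds iff either agent `k+1` has an action
guaranteeing the constraint given the prefix and, for every `s_{k+1}`, the
value of `γ(s_1, …, s_{k+1}, u_{k+2}, …, u_n)` does not depend on
`(u_{k+2}, …, u_n)`, or agent `k+1` has no such action and
`gdf_{k+1}(s_1, …, s_k, s_{k+1})` holds for every `s_{k+1}`. -/
def gdf (M : Mech) (k : ℕ) (h : k ≤ M.n) (s : M.Profile) : Prop :=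
  if hlt : k < M.n then
    ((∃ t : M.A ⟨k, hlt⟩, ∀ s' : M.Profile,
        (∀ j : Fin M.n, j.val < k → s' j = s j) → s' ⟨k, hlt⟩ = t →
          M.γ s' = true) ∧
      ∀ t : M.A ⟨k, hlt⟩, ∀ s' s'' : M.Profile,
        (∀ j : Fin M.n, j.val < k → s' j = s j) → s' ⟨k, hlt⟩ = t →
        (∀ j : Fin M.n, j.val < k → s'' j = s j) → s'' ⟨k, hlt⟩ = t →
          M.γ s' = M.γ s'') ∨
    ((¬ ∃ t : M.A ⟨k, hlt⟩, ∀ s' : M.Profile,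
        (∀ j : Fin M.n, j.val < k → s' j = s j) → s' ⟨k, hlt⟩ = t →
          M.γ s' = true) ∧
      ∀ t : M.A ⟨k, hlt⟩,
        M.gdf (k + 1) hlt (Function.update s ⟨k, hlt⟩ t))
  else M.γ s = true
termination_by M.n - k
decreasing_by omega

end Mech

namespace Mech

theorem app_eqrec (M : Mech) {a b : Fin M.n} (e : a = b) (f : M.Profile) :
    e ▸ f a = f b := by cases e; rfl

theorem eqrec_shift_app (M : Mech) {k : ℕ} {h : k ≤ M.n}
    (u : ∀ j : Fin (M.n - k), M.A (M.shift k h j))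
    {j' j : Fin (M.n - k)} (e : j' = j) (he : M.shift k h j' = M.shift k h j) :
    he ▸ u j' = u j := by cases e; exact eq_of_heq (eqRec_heq he (u j'))

theorem glue_lt (M : Mech) {k : ℕ} {h : k ≤ M.n} (s : M.Profile)
    (u : ∀ j : Fin (M.n - k), M.A (M.shift k h j)) {i : Fin M.n} (hi : i.val < k) :
    M.glue k h s u i = s i := dif_pos hi

theorem glue_shift (M : Mech) {k : ℕ} {h : k ≤ M.n} (s : M.Profile)
    (u : ∀ j : Fin (M.n - k), M.A (M.shift k h j)) (j : Fin (M.n - k)) :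
    M.glue k h s u (M.shift k h j) = u j := by
  have hnl : ¬ (M.shift k h j).val < k := by
    show ¬ k + j.val < k; omega
  unfold glue
  rw [dif_neg hnl]
  exact M.eqrec_shift_app u (Fin.ext (show k + j.val - k = j.val by omega)) _

theorem glue_ext (M : Mech) {k : ℕ} {h : k ≤ M.n} (s s' : M.Profile)
    (hs : ∀ j : Fin M.n, j.val < k → s' j = s j) :
    M.glue k h s (fun j => s' (M.shift k h j)) = s' := by
  funext i
  by_cases hi : i.val < k
  · rw [M.glue_lt s _ hi, hs i hi]
  · unfold glue
    rw [dif_neg hi]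
    exact M.app_eqrec _ s'

end Mech

namespace Mech

theorem resp_transfer (M : Mech) {k : ℕ} {h : k ≤ M.n} (s : M.Profile)
    (u : (M.part k h s).Profile) (j : Fin (M.n - k)) :
    (M.part k h s).Responsible u j ↔ M.Responsible (M.glue k h s u) (M.shift k h j) := by
  constructor
  · rintro ⟨hb, t, ht⟩
    refine ⟨hb, t, ?_⟩
    intro s'' hpre hat
    have hsk : ∀ j₀ : Fin M.n, j₀.val < k → s'' j₀ = s j₀ := by
      intro j₀ hj₀
      have hlt : j₀ < M.shift k h j := by
        show j₀.val < k + j.val; omega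
      rw [hpre j₀ hlt, M.glue_lt s u hj₀]
    have hglue : M.glue k h s (fun j' => s'' (M.shift k h j')) = s'' :=
      M.glue_ext s s'' hsk
    have := ht (fun j' => s'' (M.shift k h j')) ?_ ?_
    · show M.γ s'' = true
      rw [← hglue]
      exact this
    · intro j' hj'
      have hlt : M.shift k h j' < M.shift k h j := by
        show k + j'.val < k + j.val
        have : j'.val < j.val := hj'
        omega
      simp only [hpre _ hlt, M.glue_shift s u j']
    · exact hat
  · rintro ⟨hb, t, ht⟩
    refine ⟨hb, t, ?_⟩
    intro u' hpre hat
    show M.γ (M.glue k h s u') = true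
    apply ht
    · intro i hlt
      by_cases hi : i.val < k
      · rw [M.glue_lt s u' hi, M.glue_lt s u hi]
      · have hl : i.val - k < M.n - k := by have := i.isLt; omega
        have hsj : M.shift k h ⟨i.val - k, hl⟩ = i := Fin.ext (show k + (i.val - k) = i.val by omega)
        rw [← hsj, M.glue_shift s u', M.glue_shift s u]
        have : (⟨i.val - k, hl⟩ : Fin (M.n - k)) < j := by
          show i.val - k < j.val
          have : i.val < k + j.val := hlt
          omega
        exact hpre _ this
    · rw [M.glue_shift s u' j]
      exact hat

/-- The working predicate: every violating profile extending the prefix has a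
unique responsible agent among the agents `≥ k`. -/
def UResp (M : Mech) (k : ℕ) (s : M.Profile) : Prop :=
  ∀ s' : M.Profile, (∀ j : Fin M.n, j.val < k → s' j = s j) → M.γ s' = false →
    ∃! i : Fin M.n, k ≤ i.val ∧ M.Responsible s' i

theorem GDF_part_iff (M : Mech) (k : ℕ) (h : k ≤ M.n) (s : M.Profile) :
    (M.part k h s).GDF ↔ M.UResp k s := by
  constructor
  · intro hg s' hs hbad
    set u : (M.part k h s).Profile := fun j => s' (M.shift k h j) with hu
    have hgl : M.glue k h s u = s' := M.glue_ext s s' hs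
    have hb' : (M.part k h s).γ u = false := by
      show M.γ (M.glue k h s u) = false; rw [hgl]; exact hbad
    obtain ⟨j, hj, huniq⟩ := hg u hb'
    refine ⟨M.shift k h j, ⟨Nat.le_add_right k j.val, ?_⟩, ?_⟩
    · have := (M.resp_transfer s u j).mp hj
      rwa [hgl] at this
    · rintro i' ⟨hk', hr'⟩
      have hl : i'.val - k < M.n - k := by have := i'.isLt; omega
      have hsj' : M.shift k h ⟨i'.val - k, hl⟩ = i' :=
        Fin.ext (show k + (i'.val - k) = i'.val by omega)
      have hresp : (M.part k h s).Responsible u ⟨i'.val - k, hl⟩ := by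
        exact (M.resp_transfer s u ⟨i'.val - k, hl⟩).mpr (by rw [hgl, hsj']; exact hr')
      rw [← hsj']
      exact congrArg (M.shift k h) (huniq _ hresp)
  · intro hp u hbad
    have hs' : ∀ j : Fin M.n, j.val < k → M.glue k h s u j = s j :=
      fun j hj => M.glue_lt s u hj
    obtain ⟨i, ⟨hk, hr⟩, huniq⟩ := hp (M.glue k h s u) hs' hbad
    have hl : i.val - k < M.n - k := by have := i.isLt; omega
    have hsj : M.shift k h ⟨i.val - k, hl⟩ = i :=
      Fin.ext (show k + (i.val - k) = i.val by omega)
    refine ⟨⟨i.val - k, hl⟩, ?_, ?_⟩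
    · show (M.part k h s).Responsible u ⟨i.val - k, hl⟩
      exact (M.resp_transfer s u ⟨i.val - k, hl⟩).mpr (by rw [hsj]; exact hr)
    · intro j' hj'
      have hr' := (M.resp_transfer s u j').mp hj'
      have h2 : M.shift k h j' = i := huniq _ ⟨Nat.le_add_right k j'.val, hr'⟩
      apply Fin.ext
      have := congrArg Fin.val h2
      have hv : k + j'.val = i.val := this
      show j'.val = i.val - k
      omega

end Mech

namespace Mech

theorem resp_at_k (M : Mech) {k : ℕ} (hlt : k < M.n) (s s' : M.Profile)
    (hs : ∀ j : Fin M.n, j.val < k → s' j = s j) :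
    M.Responsible s' ⟨k, hlt⟩ ↔ (M.γ s' = false ∧
      ∃ t : M.A ⟨k, hlt⟩, ∀ s'' : M.Profile,
        (∀ j : Fin M.n, j.val < k → s'' j = s j) → s'' ⟨k, hlt⟩ = t → M.γ s'' = true) := by
  unfold Responsible
  refine and_congr_right fun _ => exists_congr fun t => forall_congr' fun s'' => ?_
  constructor
  · intro hh hpre hat
    refine hh ?_ hat
    intro j hj
    have hj' : j.val < k := hj
    rw [hs j hj']
    exact hpre j hj'
  · intro hh hpre hat
    refine hh ?_ hat
    intro j hj
    have hj' : j.val < k := hj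
    rw [← hs j hj']
    exact hpre j hj'

theorem exr (M : Mech) : ∀ (m k : ℕ), k ≤ M.n → M.n - k ≤ m →
    ∀ s a b : M.Profile,
    (∀ j : Fin M.n, j.val < k → a j = s j) → M.γ a = true →
    (∀ j : Fin M.n, j.val < k → b j = s j) → M.γ b = false →
    ∃ c : M.Profile, (∀ j : Fin M.n, j.val < k → c j = s j) ∧ M.γ c = false ∧
      ∃ i : Fin M.n, k ≤ i.val ∧ M.Responsible c i := by
  intro m
  induction m with
  | zero =>
    intro k h hm s a b ha hta hb htb
    have hab : a = b := funext fun j => by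
      rw [ha j (by have := j.isLt; omega), hb j (by have := j.isLt; omega)]
    rw [hab, htb] at hta
    exact absurd hta (by simp)
  | succ m ih =>
    intro k h hm s a b ha hta hb htb
    by_cases hlt : k < M.n
    · by_cases hcf : ∃ t : M.A ⟨k, hlt⟩, ∀ s' : M.Profile,
          (∀ j : Fin M.n, j.val < k → s' j = s j) → s' ⟨k, hlt⟩ = t → M.γ s' = true
      · refine ⟨b, hb, htb, ⟨k, hlt⟩, le_refl k, ?_⟩
        rw [M.resp_at_k hlt s b hb]
        exact ⟨htb, hcf⟩
      · push_neg at hcf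
        obtain ⟨b', hb', hbk', htb'⟩ := hcf (a ⟨k, hlt⟩)
        have htb'' : M.γ b' = false := by
          simpa using htb'
        have hb'a : ∀ j : Fin M.n, j.val < k + 1 → b' j = a j := by
          intro j hj
          by_cases hjk : j.val < k
          · rw [hb' j hjk, ha j hjk]
          · have : j = ⟨k, hlt⟩ := Fin.ext (show j.val = k by omega)
            rw [this]
            exact hbk'
        obtain ⟨c, hc, htc, i, hki, hri⟩ :=
          ih (k + 1) hlt (by omega) a a b' (fun _ _ => rfl) hta hb'a htb''
        refine ⟨c, ?_, htc, i, by omega, hri⟩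
        intro j hj
        rw [hc j (by omega), ha j hj]
    · have hab : a = b := funext fun j => by
        rw [ha j (by have := j.isLt; omega), hb j (by have := j.isLt; omega)]
      rw [hab, htb] at hta
      exact absurd hta (by simp)

theorem uresp_top (M : Mech) (k : ℕ) (hk : M.n ≤ k) (s : M.Profile) :
    M.UResp k s ↔ M.γ s = true := by
  constructor
  · intro hp
    by_contra hfalse
    have hbad : M.γ s = false := by simpa using hfalse
    obtain ⟨i, ⟨hki, _⟩, _⟩ := hp s (fun j _ => rfl) hbad
    have := i.isLt
    omega
  · intro htrue s' hs ht
    have hss : s' = s := funext fun j => hs j (by have := j.isLt; omega)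
    rw [hss, htrue] at ht
    exact absurd ht (by simp)

theorem aux (M : Mech) : ∀ (m k : ℕ) (h : k ≤ M.n), M.n - k ≤ m → ∀ s : M.Profile,
    (M.UResp k s ↔ M.gdf k h s) := by
  intro m
  induction m with
  | zero =>
    intro k h hm s
    rw [gdf, dif_neg (by omega : ¬ k < M.n)]
    exact M.uresp_top k (by omega) s
  | succ m ih =>
    intro k h hm s
    by_cases hlt : k < M.n
    · rw [gdf, dif_pos hlt]
      have hIH : ∀ t : M.A ⟨k, hlt⟩,
          M.UResp (k + 1) (Function.update s ⟨k, hlt⟩ t) ↔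
            M.gdf (k + 1) hlt (Function.update s ⟨k, hlt⟩ t) :=
        fun t => ih (k + 1) hlt (by omega) _
      have hupd_lt : ∀ (t : M.A ⟨k, hlt⟩) (j : Fin M.n), j.val < k →
          Function.update s ⟨k, hlt⟩ t j = s j := by
        intro t j hj
        apply Function.update_of_ne
        intro he
        have : j.val = k := by rw [he]
        omega
      constructor
      · intro hP
        by_cases hcf : ∃ t : M.A ⟨k, hlt⟩, ∀ s' : M.Profile,
            (∀ j : Fin M.n, j.val < k → s' j = s j) → s' ⟨k, hlt⟩ = t → M.γ s' = true
        · left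
          refine ⟨hcf, ?_⟩
          have claim : ∀ (t : M.A ⟨k, hlt⟩) (x y : M.Profile),
              (∀ j : Fin M.n, j.val < k → x j = s j) → x ⟨k, hlt⟩ = t →
              (∀ j : Fin M.n, j.val < k → y j = s j) → y ⟨k, hlt⟩ = t →
              M.γ x = false → M.γ y = true → False := by
            intro t x y hx hxk hy hyk hgx hgy
            have hyx : ∀ j : Fin M.n, j.val < k + 1 → y j = x j := by
              intro j hj
              by_cases hjk : j.val < k
              · rw [hy j hjk, hx j hjk]
              · have hj' : j = ⟨k, hlt⟩ := Fin.ext (show j.val = k by omega)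
                rw [hj', hyk, hxk]
            obtain ⟨c, hc, htc, i, hki, hri⟩ :=
              M.exr M.n (k + 1) hlt (by omega) x y x hyx hgy (fun _ _ => rfl) hgx
            have hcs : ∀ j : Fin M.n, j.val < k → c j = s j := by
              intro j hj
              rw [hc j (by omega), hx j hj]
            obtain ⟨i₀, _, huq⟩ := hP c hcs htc
            have e1 : (⟨k, hlt⟩ : Fin M.n) = i₀ := by
              apply huq
              refine ⟨le_refl k, ?_⟩
              rw [M.resp_at_k hlt s c hcs]
              exact ⟨htc, hcf⟩
            have e2 : i = i₀ := huq i ⟨by omega, hri⟩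
            have : i.val = k := by rw [e2, ← e1]
            omega
          intro t x y hx hxk hy hyk
          rcases Bool.eq_false_or_eq_true (M.γ x) with hgx | hgx <;>
            rcases Bool.eq_false_or_eq_true (M.γ y) with hgy | hgy
          · rw [hgx, hgy]
          · exact (claim t y x hy hyk hx hxk hgy hgx).elim
          · exact (claim t x y hx hxk hy hyk hgx hgy).elim
          · rw [hgx, hgy]
        · right
          refine ⟨hcf, ?_⟩
          intro t
          rw [← hIH t]
          intro s' hs' hbad
          have hsk : ∀ j : Fin M.n, j.val < k → s' j = s j := by
            intro j hj
            rw [hs' j (by omega), hupd_lt t j hj]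
          obtain ⟨i, ⟨hki, hri⟩, huq⟩ := hP s' hsk hbad
          have hik : i.val ≠ k := by
            intro he
            have hie : i = ⟨k, hlt⟩ := Fin.ext he
            rw [hie] at hri
            exact hcf ((M.resp_at_k hlt s s' hsk).mp hri).2
          refine ⟨i, ⟨by omega, hri⟩, ?_⟩
          rintro y ⟨hky, hry⟩
          exact huq y ⟨by omega, hry⟩
      · intro hQ s' hs' hbad
        rcases hQ with ⟨hcf, hind⟩ | ⟨hcf, hall⟩
        · refine ⟨⟨k, hlt⟩, ⟨le_refl k, (M.resp_at_k hlt s s' hs').mpr ⟨hbad, hcf⟩⟩, ?_⟩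
          rintro i ⟨hki, hri⟩
          by_contra hne
          have hgt : k < i.val := by
            rcases Nat.eq_or_lt_of_le hki with he | hl
            · exact absurd (Fin.ext he.symm) hne
            · exact hl
          obtain ⟨hbad', t_i, hti⟩ := hri
          have h1 : M.γ (Function.update s' i t_i) = true := by
            apply hti
            · intro j hj
              exact Function.update_of_ne (Fin.ne_of_lt hj) _ _
            · exact Function.update_self _ _ _
          have h2 : M.γ (Function.update s' i t_i) = M.γ s' := by
            apply hind (s' ⟨k, hlt⟩)
            · intro j hj
              rw [Function.update_of_ne (by intro he; rw [he] at hj; exact absurd hj (by omega)) _ _]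
              exact hs' j hj
            · exact Function.update_of_ne (by intro he; have : k = i.val := congrArg Fin.val he; omega) _ _
            · exact hs'
            · rfl
          rw [h1, hbad] at h2
          exact absurd h2 (by simp)
        · have hU := (hIH (s' ⟨k, hlt⟩)).mpr (hall (s' ⟨k, hlt⟩))
          have hpre : ∀ j : Fin M.n, j.val < k + 1 →
              s' j = Function.update s ⟨k, hlt⟩ (s' ⟨k, hlt⟩) j := by
            intro j hj
            by_cases hjk : j.val < k
            · rw [hupd_lt _ j hjk, hs' j hjk]
            · have hje : j = ⟨k, hlt⟩ := Fin.ext (show j.val = k by omega)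
              rw [hje, Function.update_self]
          obtain ⟨i, ⟨hki, hri⟩, huq⟩ := hU s' hpre hbad
          refine ⟨i, ⟨by omega, hri⟩, ?_⟩
          rintro y ⟨hky, hry⟩
          have hyk : y.val ≠ k := by
            intro he
            have hye : y = ⟨k, hlt⟩ := Fin.ext he
            rw [hye] at hry
            exact hcf ((M.resp_at_k hlt s s' hs').mp hry).2
          exact huq y ⟨by omega, hry⟩
    · rw [gdf, dif_neg hlt]
      exact M.uresp_top k (by omega) s

theorem GDF_iff_uresp_zero (M : Mech) (s : M.Profile) : M.GDF ↔ M.UResp 0 s := by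
  constructor
  · intro hg s' _ hbad
    obtain ⟨i, hi, hu⟩ := hg s' hbad
    exact ⟨i, ⟨Nat.zero_le _, hi⟩, fun y hy => hu y hy.2⟩
  · intro hp s' hbad
    obtain ⟨i, ⟨_, hi⟩, hu⟩ := hp s' (fun j hj => absurd hj (by omega)) hbad
    exact ⟨i, hi, fun y hy => hu y ⟨Nat.zero_le _, hy⟩⟩

end Mech

/-- for every `0 ≤ k ≤ n` and every prefix `(s_1, …, s_k)`, the
partial mechanism `M_k(s_1, …, s_k)` is gap-and-diffusion-free iff
`gdf_k(s_1, …, s_k)` holds; in particular, `M` is gap-and-diffusion-free iff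
`gdf_0` holds. -/
theorem part_GDF_iff_gdf (M : Mech) :
    (∀ (k : ℕ) (h : k ≤ M.n) (s : M.Profile),
        (M.part k h s).GDF ↔ M.gdf k h s) ∧
    (∀ s : M.Profile, M.GDF ↔ M.gdf 0 (Nat.zero_le _) s) := by
  constructor
  · intro k h s
    exact (M.GDF_part_iff k h s).trans (M.aux M.n k h (by omega) s)
  · intro s
    exact (M.GDF_iff_uresp_zero s).trans (M.aux M.n 0 (Nat.zero_le _) (by omega) s)
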